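/- arXiv:1509.08330 — 2 statements merged into one kernel-verified Lean document; each statement's English description precedes it below -/
import Mathlib

section
/- Let $\alpha \in \mathbb{R}$, $\mu > 0$, and let $f, g : \mathbb{R} \to \mathbb{R}$ be continuous on $[\alpha, \infty)$ and differentiable on $(\alpha, \infty)$ with $f(t) \geq 0$ and $g(t) \geq 0$ for all $t \geq \alpha$. Let $a : \mathbb{R} \to \mathbb{R}$ satisfy $(t - \alpha)\, a(t) \leq 2\mu - 1$ for all $t > \alpha$. Assume $f'(t) \leq -2 g(t) - 2 f(t)^2$ and $g'(t) \leq a(t)\, g(t)$ for all $t > \alpha$. Then $(t-\alpha)\, g(t) + \mu f(t) \leq \mu f(\alpha)$ for all $t \geq \alpha$; in particular $g(t) \leq \frac{\mu f(\alpha)}{t - \alpha}$ for all $t > \alpha$. -/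
/-!
The time-weighted energy `F t = (t - α) g t + μ f t` is nonincreasing: its derivative is
`g + (t - α) g' + μ f' ≤ (1 + (t - α) a - 2μ) g - 2μ f² ≤ 0`, since the hypothesis on `a` makes
the coefficient of `g ≥ 0` nonpositive. Comparing with `F α = μ f α` and dropping `μ f t ≥ 0`
gives the decay of `g`.
-/

open Set

/-- The paper's `F₁ = (t - α)|D²u|² + μ|∇u|²`, with `g` and `f` the suprema of `|D²u|²` and
`|∇u|²`. -/
def weightedEnergy (α μ : ℝ) (f g : ℝ → ℝ) (t : ℝ) : ℝ :=
  (t - α) * g t + μ * f t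

theorem hasDerivAt_weightedEnergy {α μ : ℝ} {f g : ℝ → ℝ} {f' g' t : ℝ}
    (hf : HasDerivAt f f' t) (hg : HasDerivAt g g' t) :
    HasDerivAt (weightedEnergy α μ f g) (g t + (t - α) * g' + μ * f') t := by
  have h := (((hasDerivAt_id t).sub_const α).mul hg).add (hf.const_mul μ)
  rwa [one_mul] at h

theorem continuousOn_weightedEnergy {α μ : ℝ} {f g : ℝ → ℝ} {s : Set ℝ}
    (hf : ContinuousOn f s) (hg : ContinuousOn g s) :
    ContinuousOn (weightedEnergy α μ f g) s :=
  ((continuousOn_id.sub continuousOn_const).mul hg).add (continuousOn_const.mul hf)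

theorem weightedEnergy_deriv_nonpos {μ s a x y x' y' : ℝ} (hμ : 0 ≤ μ) (hs : 0 ≤ s) (hy : 0 ≤ y)
    (ha : s * a ≤ 2 * μ - 1) (hx' : x' ≤ -2 * y - 2 * x ^ 2) (hy' : y' ≤ a * y) :
    y + s * y' + μ * x' ≤ 0 := by
  calc y + s * y' + μ * x'
      ≤ y + s * a * y + μ * (-2 * y - 2 * x ^ 2) := by
        rw [mul_assoc]; gcongr
    _ ≤ y + (2 * μ - 1) * y + μ * (-2 * y - 2 * x ^ 2) := by gcongr
    _ = -(2 * μ * x ^ 2) := by ring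
    _ ≤ 0 := by rw [neg_nonpos]; positivity

theorem weightedEnergy_le_of_hasDerivAt {α μ : ℝ} (hμ : 0 ≤ μ) {f f' g g' a : ℝ → ℝ}
    (hfc : ContinuousOn f (Ici α)) (hgc : ContinuousOn g (Ici α))
    (hfd : ∀ t, α < t → HasDerivAt f (f' t) t) (hgd : ∀ t, α < t → HasDerivAt g (g' t) t)
    (hg0 : ∀ t, α ≤ t → 0 ≤ g t) (ha : ∀ t, α < t → (t - α) * a t ≤ 2 * μ - 1)
    (hf' : ∀ t, α < t → f' t ≤ -2 * g t - 2 * f t ^ 2) (hg' : ∀ t, α < t → g' t ≤ a t * g t)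
    {t : ℝ} (ht : α ≤ t) :
    weightedEnergy α μ f g t ≤ μ * f α := by
  have hanti : AntitoneOn (weightedEnergy α μ f g) (Ici α) := by
    refine antitoneOn_of_hasDerivWithinAt_nonpos (f' := fun s => g s + (s - α) * g' s + μ * f' s)
      (convex_Ici α) (continuousOn_weightedEnergy hfc hgc) (fun s hs => ?_) (fun s hs => ?_)
    all_goals rw [interior_Ici] at hs
    · rw [interior_Ici]
      exact (hasDerivAt_weightedEnergy (hfd s hs) (hgd s hs)).hasDerivWithinAt
    · exact weightedEnergy_deriv_nonpos hμ (sub_nonneg.2 hs.le) (hg0 s hs.le) (ha s hs)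
        (hf' s hs) (hg' s hs)
  simpa [weightedEnergy] using hanti self_mem_Ici ht ht

/-- Time-weighted second-derivative decay (ODE model): with `f, g ≥ 0` continuous on
`[α, ∞)` and differentiable on `(α, ∞)`, `(t - α) a t ≤ 2μ - 1`, `f' ≤ -2g - 2f²` and
`g' ≤ a g`, the quantity `(t - α) g + μ f` is bounded by `μ f(α)`; in particular
`g t ≤ μ f(α) / (t - α)` for `t > α`. -/
theorem weighted_second_derivative_decay (α μ : ℝ) (hμ : 0 < μ) (f f' g g' a : ℝ → ℝ)
    (hfc : ContinuousOn f (Set.Ici α)) (hgc : ContinuousOn g (Set.Ici α))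
    (hfd : ∀ t : ℝ, α < t → HasDerivAt f (f' t) t)
    (hgd : ∀ t : ℝ, α < t → HasDerivAt g (g' t) t)
    (hf0 : ∀ t : ℝ, α ≤ t → 0 ≤ f t)
    (hg0 : ∀ t : ℝ, α ≤ t → 0 ≤ g t)
    (ha : ∀ t : ℝ, α < t → (t - α) * a t ≤ 2 * μ - 1)
    (hf' : ∀ t : ℝ, α < t → f' t ≤ -2 * g t - 2 * (f t) ^ 2)
    (hg' : ∀ t : ℝ, α < t → g' t ≤ a t * g t) :
    (∀ t : ℝ, α ≤ t → (t - α) * g t + μ * f t ≤ μ * f α) ∧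
      (∀ t : ℝ, α < t → g t ≤ μ * f α / (t - α)) := by
  have henergy : ∀ t, α ≤ t → (t - α) * g t + μ * f t ≤ μ * f α := fun t ht =>
    weightedEnergy_le_of_hasDerivAt hμ.le hfc hgc hfd hgd hg0 ha hf' hg' ht
  refine ⟨henergy, fun t ht => ?_⟩
  rw [le_div_iff₀ (sub_pos.2 ht), mul_comm]
  have := henergy t ht.le
  have := mul_nonneg hμ.le (hf0 t ht.le)
  linarith
end

section
/- Let $0 < \alpha$, $A \geq 0$, $C \geq 0$, $C_0 \geq 0$, and let $f, g, v, r : \mathbb{R} \to \mathbb{R}$ be functions with $f, g, v$ continuous on $[\alpha, \infty)$ and differentiable on $(\alpha, \infty)$, satisfying for all $t \geq \alpha$: $f(t) \geq 0$, $g(t) \geq 0$, $0 \leq v(t) \leq C_0^2$, $r(t) \geq 0$, and $t\, r(t) \leq A$; and for all $t > \alpha$: $v'(t) \leq -2 f(t)$, $f'(t) \leq -2 g(t) - 2 f(t)^2$, and $g'(t) \leq C\,(r(t) + f(t))\, g(t)$. Then there exists a constant $C' > 0$ (depending only on $\alpha$, $A$, $C$, $C_0$, $f(\alpha)$, $g(\alpha)$)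 such that $t\,(f(t) + g(t)) \leq C'$ for all $t \geq 2\alpha$. -/
/-!
Since `f' ≤ -2 f²`, the quantity `1/f(t) - 2t` is nondecreasing, which gives `f(t) ≤ 1/(2(t - α))`
and hence `t f(t) ≤ 1` for `t ≥ 2α`. For `g`, the Lyapunov function
`W(t) = f(t) + ε t g(t) e^{C v(t)/2}` is nonincreasing once `ε (1 + C A) e^{C C₀²/2} ≤ 2`:
the weight `e^{C v/2}` absorbs the term `C f g` in the evolution of `g` (because `v' ≤ -2f`),
the Type III bound turns `C t r g` into `C A g`, and the good term `-2g` in `f'` pays for the rest.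
Therefore `ε t g(t) ≤ W(t) ≤ W(α)`.
-/

open Set Real

theorem antitoneOn_Ici_of_hasDerivAt_nonpos {f f' : ℝ → ℝ} {a : ℝ}
    (hfc : ContinuousOn f (Ici a)) (hfd : ∀ t, a < t → HasDerivAt f (f' t) t)
    (hf' : ∀ t, a < t → f' t ≤ 0) : AntitoneOn f (Ici a) :=
  antitoneOn_of_hasDerivWithinAt_nonpos (convex_Ici a) hfc
    (fun t ht ↦ (hfd t (by simpa using ht)).hasDerivWithinAt)
    (fun t ht ↦ hf' t (by simpa using ht))

theorem le_one_div_of_hasDerivAt_le_neg_mul_sq {f f' : ℝ → ℝ} {a c t : ℝ} (hc : 0 < c)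
    (hfc : ContinuousOn f (Ici a)) (hfd : ∀ s, a < s → HasDerivAt f (f' s) s)
    (hf' : ∀ s, a < s → f' s ≤ -c * f s ^ 2) (ht : a < t) :
    f t ≤ 1 / (c * (t - a)) := by
  have hden : 0 < c * (t - a) := mul_pos hc (sub_pos.2 ht)
  rcases le_or_gt (f t) 0 with hft | hft
  · exact hft.trans (by positivity)
  have hanti : AntitoneOn f (Ici a) := antitoneOn_Ici_of_hasDerivAt_nonpos hfc hfd
    fun s hs ↦ (hf' s hs).trans (by nlinarith [sq_nonneg (f s)])
  have hfpos : ∀ s ∈ Icc a t, 0 < f s :=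
    fun s hs ↦ hft.trans_le (hanti hs.1 (hs.1.trans hs.2) hs.2)
  have hmono : MonotoneOn (fun s ↦ (f s)⁻¹ - c * s) (Icc a t) := by
    refine monotoneOn_of_hasDerivWithinAt_nonneg (f' := fun s ↦ -f' s / f s ^ 2 - c * 1)
      (convex_Icc a t) ?_ ?_ ?_
    · exact ((hfc.mono Icc_subset_Ici_self).inv₀ fun s hs ↦ (hfpos s hs).ne').sub
        (continuousOn_const.mul continuousOn_id)
    · rw [interior_Icc]
      exact fun s hs ↦ (((hfd s hs.1).inv (hfpos s (Ioo_subset_Icc_self hs)).ne').sub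
        ((hasDerivAt_id s).const_mul c)).hasDerivWithinAt
    · rw [interior_Icc]
      intro s hs
      have := hf' s hs.1
      have := hfpos s (Ioo_subset_Icc_self hs)
      rw [mul_one, sub_nonneg, le_div_iff₀ (by positivity)]
      linarith
  have hinv : c * (t - a) ≤ (f t)⁻¹ := by
    have hendpoints : (f a)⁻¹ - c * a ≤ (f t)⁻¹ - c * t :=
      hmono (left_mem_Icc.2 ht.le) (right_mem_Icc.2 ht.le) ht.le
    have hfa := inv_pos.2 (hfpos a (left_mem_Icc.2 ht.le))
    linarith
  rw [one_div]
  exact (le_inv_comm₀ hft hden).2 hinv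

noncomputable def expWeighted (C : ℝ) (g v : ℝ → ℝ) (t : ℝ) : ℝ := t * g t * exp (C * v t / 2)

section ExpWeighted

variable {C : ℝ} {g v : ℝ → ℝ}

theorem le_expWeighted {t : ℝ} (hC : 0 ≤ C) (ht : 0 ≤ t) (hg : 0 ≤ g t) (hv : 0 ≤ v t) :
    t * g t ≤ expWeighted C g v t :=
  le_mul_of_one_le_right (mul_nonneg ht hg) (one_le_exp (by positivity))

theorem expWeighted_nonneg {t : ℝ} (ht : 0 ≤ t) (hg : 0 ≤ g t) : 0 ≤ expWeighted C g v t := by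
  unfold expWeighted; positivity

theorem hasDerivAt_expWeighted {g' v' : ℝ} {t : ℝ} (hg : HasDerivAt g g' t)
    (hv : HasDerivAt v v' t) :
    HasDerivAt (expWeighted C g v)
      ((g t + t * g' + t * g t * (C * v' / 2)) * exp (C * v t / 2)) t := by
  have h := ((hasDerivAt_id' t).fun_mul hg).fun_mul ((hv.const_mul C).div_const 2).exp
  exact h.congr_deriv (by ring)

theorem expWeighted_deriv_factor_le {A C t f r g g' v' : ℝ} (hC : 0 ≤ C) (ht : 0 ≤ t)
    (hg : 0 ≤ g) (hrA : t * r ≤ A) (hv' : v' ≤ -2 * f) (hg' : g' ≤ C * (r + f) * g) :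
    g + t * g' + t * g * (C * v' / 2) ≤ (1 + C * A) * g :=
  calc g + t * g' + t * g * (C * v' / 2)
      ≤ g + t * (C * (r + f) * g) + t * g * (C * (-2 * f) / 2) := by gcongr
    _ = g + C * (t * r) * g := by ring
    _ ≤ g + C * A * g := by gcongr
    _ = (1 + C * A) * g := by ring

theorem antitoneOn_add_mul_expWeighted {f f' g' v' r : ℝ → ℝ} {a A K ε : ℝ} (ha : 0 ≤ a)
    (hA : 0 ≤ A) (hC : 0 ≤ C) (hε : 0 ≤ ε) (hεK : ε * ((1 + C * A) * exp (C * K / 2)) ≤ 2)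
    (hfc : ContinuousOn f (Ici a)) (hgc : ContinuousOn g (Ici a)) (hvc : ContinuousOn v (Ici a))
    (hfd : ∀ t, a < t → HasDerivAt f (f' t) t) (hgd : ∀ t, a < t → HasDerivAt g (g' t) t)
    (hvd : ∀ t, a < t → HasDerivAt v (v' t) t) (hg0 : ∀ t, a < t → 0 ≤ g t)
    (hvK : ∀ t, a < t → v t ≤ K) (hrA : ∀ t, a < t → t * r t ≤ A)
    (hf' : ∀ t, a < t → f' t ≤ -2 * g t) (hg' : ∀ t, a < t → g' t ≤ C * (r t + f t) * g t)
    (hv' : ∀ t, a < t → v' t ≤ -2 * f t) :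
    AntitoneOn (fun t ↦ f t + ε * expWeighted C g v t) (Ici a) := by
  refine antitoneOn_Ici_of_hasDerivAt_nonpos ?_
    (fun t ht ↦ (hfd t ht).add ((hasDerivAt_expWeighted (hgd t ht) (hvd t ht)).const_mul ε))
    fun t ht ↦ ?_
  · exact hfc.add (continuousOn_const.mul ((continuousOn_id.mul hgc).mul
      ((continuousOn_const.mul hvc).div_const 2).rexp))
  have hCA : 0 ≤ 1 + C * A := by positivity
  have hweight : exp (C * v t / 2) ≤ exp (C * K / 2) := exp_le_exp.2 (by gcongr; exact hvK t ht)
  have hfactor := expWeighted_deriv_factor_le hC (ha.trans ht.le) (hg0 t ht) (hrA t ht)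
    (hv' t ht) (hg' t ht)
  have hg := hg0 t ht
  have hf't := hf' t ht
  calc f' t + ε * ((g t + t * g' t + t * g t * (C * v' t / 2)) * exp (C * v t / 2))
      ≤ -2 * g t + ε * ((1 + C * A) * g t * exp (C * K / 2)) := by gcongr
    _ = -2 * g t + ε * ((1 + C * A) * exp (C * K / 2)) * g t := by ring
    _ ≤ -2 * g t + 2 * g t := by gcongr
    _ = 0 := by ring

end ExpWeighted

theorem typeIII_decay_general (α A C C₀ : ℝ) (hα : 0 < α) (hA : 0 ≤ A) (hC : 0 ≤ C)
    (f f' g g' v v' r : ℝ → ℝ)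
    (hfc : ContinuousOn f (Set.Ici α)) (hgc : ContinuousOn g (Set.Ici α))
    (hvc : ContinuousOn v (Set.Ici α))
    (hfd : ∀ t : ℝ, α < t → HasDerivAt f (f' t) t)
    (hgd : ∀ t : ℝ, α < t → HasDerivAt g (g' t) t)
    (hvd : ∀ t : ℝ, α < t → HasDerivAt v (v' t) t)
    (hf0 : ∀ t : ℝ, α ≤ t → 0 ≤ f t)
    (hg0 : ∀ t : ℝ, α ≤ t → 0 ≤ g t)
    (hv0 : ∀ t : ℝ, α ≤ t → 0 ≤ v t)
    (hvC : ∀ t : ℝ, α ≤ t → v t ≤ C₀ ^ 2)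
    (hrA : ∀ t : ℝ, α ≤ t → t * r t ≤ A)
    (hv' : ∀ t : ℝ, α < t → v' t ≤ -2 * f t)
    (hf' : ∀ t : ℝ, α < t → f' t ≤ -2 * g t - 2 * (f t) ^ 2)
    (hg' : ∀ t : ℝ, α < t → g' t ≤ C * (r t + f t) * g t) :
    ∃ C' : ℝ, 0 < C' ∧ ∀ t : ℝ, 2 * α ≤ t → t * (f t + g t) ≤ C' := by
  set ε := 2 / ((1 + C * A) * exp (C * C₀ ^ 2 / 2))
  have hε : 0 < ε := by positivity
  have hW := antitoneOn_add_mul_expWeighted hα.le hA hC hε.le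
    (div_mul_cancel₀ _ (by positivity)).le hfc hgc hvc hfd hgd hvd (fun t ht ↦ hg0 t ht.le)
    (fun t ht ↦ hvC t ht.le) (fun t ht ↦ hrA t ht.le)
    (fun t ht ↦ (hf' t ht).trans (by linarith [sq_nonneg (f t)])) hg' hv'
  refine ⟨1 + (f α + ε * expWeighted C g v α) / ε, ?_, fun t ht ↦ ?_⟩
  · have hfα := hf0 α le_rfl
    have hWα := expWeighted_nonneg (C := C) (v := v) hα.le (hg0 α le_rfl)
    positivity
  have hαt : α < t := by linarith
  have ht0 : 0 ≤ t := by linarith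
  have htf : t * f t ≤ 1 := by
    have := le_one_div_of_hasDerivAt_le_neg_mul_sq two_pos hfc hfd
      (fun s hs ↦ (hf' s hs).trans (by linarith [hg0 s hs.le])) hαt
    calc t * f t ≤ t * (1 / (2 * (t - α))) := by gcongr
      _ ≤ 1 := by rw [mul_one_div, div_le_one (by linarith)]; linarith
  have htg : ε * (t * g t) ≤ f α + ε * expWeighted C g v α :=
    calc ε * (t * g t) ≤ ε * expWeighted C g v t := by
          gcongr; exact le_expWeighted hC ht0 (hg0 t hαt.le) (hv0 t hαt.le)
      _ ≤ f t + ε * expWeighted C g v t := le_add_of_nonneg_left (hf0 t hαt.le)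
      _ ≤ f α + ε * expWeighted C g v α := hW self_mem_Ici hαt.le hαt.le
  rw [mul_add]
  linarith [(le_div_iff₀' hε).2 htg]

/-- ODE model of Theorem 2 (Type III warped-product Ricci flow): under the listed
differential inequalities for `f = sup |∇u|²`, `g = sup |D²u|²`, `v = sup u²` and the
Type III bound `t * r t ≤ A` on `r = sup |Rm(h)|`, there is a constant `C' > 0`
(depending only on `α, A, C, C₀, f(α), g(α)`) with `t (f t + g t) ≤ C'` for `t ≥ 2α`. -/
theorem typeIII_decay (α A C C₀ : ℝ) (hα : 0 < α) (hA : 0 ≤ A) (hC : 0 ≤ C)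
    (hC₀ : 0 ≤ C₀) (f f' g g' v v' r : ℝ → ℝ)
    (hfc : ContinuousOn f (Set.Ici α)) (hgc : ContinuousOn g (Set.Ici α))
    (hvc : ContinuousOn v (Set.Ici α))
    (hfd : ∀ t : ℝ, α < t → HasDerivAt f (f' t) t)
    (hgd : ∀ t : ℝ, α < t → HasDerivAt g (g' t) t)
    (hvd : ∀ t : ℝ, α < t → HasDerivAt v (v' t) t)
    (hf0 : ∀ t : ℝ, α ≤ t → 0 ≤ f t)
    (hg0 : ∀ t : ℝ, α ≤ t → 0 ≤ g t)
    (hv0 : ∀ t : ℝ, α ≤ t → 0 ≤ v t)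
    (hvC : ∀ t : ℝ, α ≤ t → v t ≤ C₀ ^ 2)
    (hr0 : ∀ t : ℝ, α ≤ t → 0 ≤ r t)
    (hrA : ∀ t : ℝ, α ≤ t → t * r t ≤ A)
    (hv' : ∀ t : ℝ, α < t → v' t ≤ -2 * f t)
    (hf' : ∀ t : ℝ, α < t → f' t ≤ -2 * g t - 2 * (f t) ^ 2)
    (hg' : ∀ t : ℝ, α < t → g' t ≤ C * (r t + f t) * g t) :
    ∃ C' : ℝ, 0 < C' ∧ ∀ t : ℝ, 2 * α ≤ t → t * (f t + g t) ≤ C' :=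
  typeIII_decay_general α A C C₀ hα hA hC f f' g g' v v' r hfc hgc hvc hfd hgd hvd hf0 hg0 hv0 hvC
    hrA hv' hf' hg'
end
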